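/- Let G be a connected planar cubic graph and let G' be the graph obtained by subdividing every edge of G once. Interpret G' as a positive SAT graph where the original vertices of G are clauses (each clause containing its three incident subdivision variables) and the subdivision vertices are variables. Then G has a spanning 2-matching if and only if this positive NAE 3-SAT instance has a satisfying not-all-equal assignment. -/

import Mathlib

open SimpleGraph

def IsPlanar {V : Type} (G : SimpleGraph V) : Prop :=
  ∃ pos : V → ℝ × ℝ, Function.Injective pos ∧
    ∃ arc : ∀ ⦃u w : V⦄, G.Adj u w → Path (pos u) (pos w),
      (∀ ⦃u w : V⦄ (h : G.Adj u w), Function.Injective (arc h)) ∧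
      (∀ ⦃u w x y : V⦄ (h₁ : G.Adj u w) (h₂ : G.Adj x y),
        (s(u, w) : Sym2 V) ≠ s(x, y) →
        ∀ t₁ t₂ : unitInterval, (arc h₁) t₁ = (arc h₂) t₂ →
          (arc h₁) t₁ ∈ pos '' ({u, w} ∩ {x, y} : Set V))

/-! An edge set `F` and an assignment `σ` correspond via `σ = (· ∈ F)`. Every vertex has exactly
three incident edges, so `F` contains one or two of them exactly when it contains some but not all
of them, which is the not-all-equal condition for the clause of that vertex. -/

theorem Set.ncard_pos_and_ncard_lt_iff {α : Type*} {s t : Set α} (hst : s ⊆ t) (ht : t.Finite) :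
    (0 < s.ncard ∧ s.ncard < t.ncard) ↔ s.Nonempty ∧ (t \ s).Nonempty := by
  rw [Set.ncard_pos (ht.subset hst), Set.sdiff_nonempty]
  refine and_congr_right fun _ => ⟨fun hlt hts => ?_, fun hts => Set.ncard_lt_ncard ⟨hst, hts⟩ ht⟩
  rw [hst.antisymm hts] at hlt
  exact hlt.false

namespace SimpleGraph

variable {V : Type} (G : SimpleGraph V)

theorem ncard_incidenceSet (v : V) :
    (G.incidenceSet v).ncard = (G.neighborSet v).ncard := by
  classical
  exact Nat.card_congr (G.incidenceSetEquivNeighborSet v)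

variable {G}

theorem one_le_ncard_incident_le_two_iff {v : V} {F : Set (Sym2 V)}
    (hv : (G.neighborSet v).ncard = 3) (hF : F ⊆ G.edgeSet) :
    (1 ≤ {e ∈ F | v ∈ e}.ncard ∧ {e ∈ F | v ∈ e}.ncard ≤ 2) ↔
      (∃ e ∈ G.edgeSet, v ∈ e ∧ e ∈ F) ∧ (∃ e ∈ G.edgeSet, v ∈ e ∧ e ∉ F) := by
  have hI : (G.incidenceSet v).ncard = 3 := (G.ncard_incidenceSet v).trans hv
  have hsep : {e ∈ F | v ∈ e} = G.incidenceSet v ∩ F := by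
    ext e
    exact ⟨fun ⟨heF, hve⟩ => ⟨⟨hF heF, hve⟩, heF⟩, fun ⟨⟨_, hve⟩, heF⟩ => ⟨heF, hve⟩⟩
  have key := Set.ncard_pos_and_ncard_lt_iff (Set.inter_subset_left (t := F))
    (Set.finite_of_ncard_ne_zero (hI.trans_ne three_ne_zero))
  rw [hsep, show ∀ n : ℕ, (1 ≤ n ∧ n ≤ 2) ↔ (0 < n ∧ n < 3) by omega, ← hI, key,
    Set.sdiff_self_inter]
  simp only [Set.Nonempty, incidenceSet, Set.mem_inter_iff, Set.mem_sdiff, Set.mem_ofPred_eq,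
    and_assoc]

end SimpleGraph

theorem spanning_two_matching_iff_NAE_general
    {V : Type}
    (G : SimpleGraph V)
    (hcubic : ∀ v : V, (G.neighborSet v).ncard = 3) :
    (∃ F : Set (Sym2 V), F ⊆ G.edgeSet ∧
        ∀ v : V, 1 ≤ {e ∈ F | v ∈ e}.ncard ∧ {e ∈ F | v ∈ e}.ncard ≤ 2) ↔
      (∃ σ : Sym2 V → Bool, ∀ v : V,
        (∃ e ∈ G.edgeSet, v ∈ e ∧ σ e = true) ∧
        (∃ e ∈ G.edgeSet, v ∈ e ∧ σ e = false)) := by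
  constructor
  · rintro ⟨F, hF, hdeg⟩
    classical
    refine ⟨fun e => decide (e ∈ F), fun v => ?_⟩
    simpa using (one_le_ncard_incident_le_two_iff (hcubic v) hF).1 (hdeg v)
  · rintro ⟨σ, hσ⟩
    have hF : {e ∈ G.edgeSet | σ e} ⊆ G.edgeSet := Set.sep_subset _ _
    refine ⟨_, hF, fun v => (one_le_ncard_incident_le_two_iff (hcubic v) hF).2 ?_⟩
    obtain ⟨⟨e, he, hve, hσe⟩, ⟨f, hf, hvf, hσf⟩⟩ := hσ v
    exact ⟨⟨e, he, hve, he, hσe⟩, ⟨f, hf, hvf, fun h => by simp [hσf] at h⟩⟩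

/-- for a connected planar cubic graph `G`, subdividing every edge once
and reading the result as a positive SAT graph (original vertices are clauses, each
clause consisting of its three incident subdivision variables, i.e. edges), `G` has
a spanning 2-matching iff the resulting positive NAE 3-SAT instance is satisfiable. -/
theorem spanning_two_matching_iff_NAE
    {V : Type} [Fintype V]
    (G : SimpleGraph V) (hconn : G.Connected) (hplanar : IsPlanar G)
    (hcubic : ∀ v : V, (G.neighborSet v).ncard = 3) :
    (∃ F : Set (Sym2 V), F ⊆ G.edgeSet ∧
        ∀ v : V, 1 ≤ {e ∈ F | v ∈ e}.ncard ∧ {e ∈ F | v ∈ e}.ncard ≤ 2) ↔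
      (∃ σ : Sym2 V → Bool, ∀ v : V,
        (∃ e ∈ G.edgeSet, v ∈ e ∧ σ e = true) ∧
        (∃ e ∈ G.edgeSet, v ∈ e ∧ σ e = false)) :=
  spanning_two_matching_iff_NAE_general G hcubic
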